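/- arXiv:1208.0133 — 3 statements merged into one kernel-verified Lean document; each statement's English description precedes it below -/
import Mathlib

section
/- If a partition P of a finite set S has at least two parts and a partition Q of S has at least two parts, then it is impossible that for every pair of elements x, y of S, x and y lie in the same part of P or in the same part of Q whenever they lie in different parts of the other partition; formally, the relation 'same part of P or same part of Q' cannot hold for all pairs unless one of the partitions is trivial. -/
namespace Setoid

variable {α : Type*} {P Q : Setoid α}

theorem rel_of_forall_rel_or_rel_of_not_rel (h : ∀ x y, P.r x y ∨ Q.r x y) {a b : α}
    (hab : ¬ P.r a b) (x : α) : Q.r x a := by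
  have hQab : Q.r a b := (h a b).resolve_left hab
  rcases h x a with hxa | hxa
  · rcases h x b with hxb | hxb
    · exact absurd (P.trans (P.symm hxa) hxb) hab
    · exact Q.trans hxb (Q.symm hQab)
  · exact hxa

theorem forall_rel_of_forall_rel_or_rel_of_not_rel (h : ∀ x y, P.r x y ∨ Q.r x y) {a b : α}
    (hab : ¬ P.r a b) (x y : α) : Q.r x y :=
  Q.trans (rel_of_forall_rel_or_rel_of_not_rel h hab x)
    (Q.symm (rel_of_forall_rel_or_rel_of_not_rel h hab y))

end Setoid

theorem not_all_pairs_related_general {S : Type*}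
    (P Q : Setoid S)
    (hP : ∃ x y : S, ¬ P.r x y) (hQ : ∃ x y : S, ¬ Q.r x y) :
    ¬ (∀ x y : S, P.r x y ∨ Q.r x y) := by
  intro h
  obtain ⟨a, b, hab⟩ := hP
  obtain ⟨c, d, hcd⟩ := hQ
  exact hcd (Setoid.forall_rel_of_forall_rel_or_rel_of_not_rel h hab c d)

/-- If two partitions (equivalence relations) `P`, `Q` of a finite set `S` each
have at least two parts (i.e. neither is trivial: for each there is an
unrelated pair), then it cannot be that every pair of elements is in the same
part of `P` or in the same part of `Q`. -/
theorem not_all_pairs_related {S : Type*} [Fintype S]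
    (P Q : Setoid S)
    (hP : ∃ x y : S, ¬ P.r x y) (hQ : ∃ x y : S, ¬ Q.r x y) :
    ¬ (∀ x y : S, P.r x y ∨ Q.r x y) :=
  not_all_pairs_related_general P Q hP hQ
end

section
/- A single DCJ operation on a genome changes the number of alternating cycles in the breakpoint graph with any fixed second genome by at most 1; consequently it changes the DCJ distance by at most 1. -/
/-!
Adjoining the single edge `{x, y}` to the breakpoint graph of `σ'` and `τ` merges at most two
cycles, and the enlarged graph already connects every `σ`-edge: `{x, y}` is there, and
`{u, v}` is joined through `u – x – y – v` by the new `σ'`-edges. Hence `c(σ', τ) ≤ c(σ, τ) + 1`,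
and the reverse DCJ from `σ'` to `σ` gives the other inequality.
-/

open Relation

namespace Relation

variable {α : Type*}

theorem card_quotient_eqvGen_le_of_forall_eqvGen [Finite α] {r s : α → α → Prop}
    (h : ∀ a b, r a b → EqvGen s a b) :
    Nat.card (Quotient (EqvGen.setoid s)) ≤ Nat.card (Quotient (EqvGen.setoid r)) := by
  have hle : ∀ ⦃a b⦄, EqvGen r a b → EqvGen s a b := fun a b hab =>
    (EqvGen.is_equivalence s).eqvGen_iff.1 (EqvGen.mono h a b hab)
  exact Nat.card_le_card_of_surjective _ (Quotient.map_surjective hle Function.surjective_id)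

theorem EqvGen.or_of_adjoin {r : α → α → Prop} {a b x y : α}
    (h : EqvGen (fun p q => r p q ∨ p = a ∧ q = b) x y) :
    EqvGen r x y ∨
      ((EqvGen r x a ∨ EqvGen r x b) ∧ (EqvGen r y a ∨ EqvGen r y b)) := by
  induction h with
  | rel p q hpq =>
    rcases hpq with hpq | ⟨rfl, rfl⟩
    · exact .inl (.rel _ _ hpq)
    · exact .inr ⟨.inl (.refl _), .inr (.refl _)⟩
  | refl p => exact .inl (.refl p)
  | symm p q _ ih => exact ih.imp (·.symm) And.symm
  | trans p q s _ _ ih₁ ih₂ =>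
    rcases ih₁ with hpq | ⟨hp, hq⟩ <;> rcases ih₂ with hqs | ⟨hq', hs⟩
    · exact .inl (hpq.trans _ _ _ hqs)
    · exact .inr ⟨hq'.imp (hpq.trans _ _ _) (hpq.trans _ _ _), hs⟩
    · exact .inr ⟨hp, hq.imp (hqs.symm.trans _ _ _) (hqs.symm.trans _ _ _)⟩
    · exact .inr ⟨hp, hs⟩

theorem card_quotient_eqvGen_le_card_adjoin_add_one [Finite α] (r : α → α → Prop) (a b : α) :
    Nat.card (Quotient (EqvGen.setoid r)) ≤
      Nat.card (Quotient (EqvGen.setoid (fun p q => r p q ∨ p = a ∧ q = b))) + 1 := by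
  classical
  set t : α → α → Prop := fun p q => r p q ∨ p = a ∧ q = b
  let φ : Quotient (EqvGen.setoid r) → Quotient (EqvGen.setoid t) :=
    Quotient.map' id fun p q h => EqvGen.mono (fun _ _ => Or.inl) p q h
  -- The class of `a` is sent away; on the other classes `φ` is injective.
  let f : Quotient (EqvGen.setoid r) → Option (Quotient (EqvGen.setoid t)) :=
    fun c => if c = Quotient.mk _ a then none else some (φ c)
  have hf : Function.Injective f := by
    intro c d hcd
    by_cases hc : c = Quotient.mk _ a <;> by_cases hd : d = Quotient.mk _ a
    · exact hc.trans hd.symm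
    · simp [f, hc, hd] at hcd
    · simp [f, hc, hd] at hcd
    · simp only [f, hc, hd, if_false, Option.some_inj] at hcd
      obtain ⟨p, rfl⟩ := Quotient.exists_rep c
      obtain ⟨q, rfl⟩ := Quotient.exists_rep d
      have hpa : ¬EqvGen r p a := fun h => hc (Quotient.sound h)
      have hqa : ¬EqvGen r q a := fun h => hd (Quotient.sound h)
      rcases EqvGen.or_of_adjoin (Quotient.exact hcd) with h | ⟨hp, hq⟩
      · exact Quotient.sound h
      · exact Quotient.sound ((hp.resolve_left hpa).trans _ _ _ (hq.resolve_left hqa).symm)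
  calc Nat.card (Quotient (EqvGen.setoid r))
      ≤ Nat.card (Option (Quotient (EqvGen.setoid t))) := Nat.card_le_card_of_injective f hf
    _ = Nat.card (Quotient (EqvGen.setoid t)) + 1 := Finite.card_option

end Relation

section DCJ

variable {α : Type*} [Finite α]

theorem card_cycles_le_add_one_of_dcj {σ σ' τ : α → α}
    (hσ : ∀ z, σ (σ z) = z) (hσ' : ∀ z, σ' (σ' z) = z) {x y u v : α}
    (hxy : σ x = y) (huv : σ u = v) (hxu : σ' x = u) (hyv : σ' y = v)
    (hrest : ∀ z, z ≠ x → z ≠ y → z ≠ u → z ≠ v → σ' z = σ z) :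
    Nat.card (Quotient (EqvGen.setoid (fun a b => σ' a = b ∨ τ a = b))) ≤
      Nat.card (Quotient (EqvGen.setoid (fun a b => σ a = b ∨ τ a = b))) + 1 := by
  set t : α → α → Prop := fun p q => (σ' p = q ∨ τ p = q) ∨ p = x ∧ q = y
  have hxy' : EqvGen t x y := .rel _ _ (.inr ⟨rfl, rfl⟩)
  have huv' : EqvGen t u v := by
    have hux : EqvGen t u x := .rel _ _ (.inl (.inl (by rw [← hxu, hσ'])))
    have hyv' : EqvGen t y v := .rel _ _ (.inl (.inl hyv))
    exact (hux.trans _ _ _ hxy').trans _ _ _ hyv'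
  have hyx : σ y = x := by rw [← hxy, hσ]
  have hvu : σ v = u := by rw [← huv, hσ]
  have hσt : ∀ a, EqvGen t a (σ a) := by
    intro a
    by_cases hax : a = x
    · rw [hax, hxy]; exact hxy'
    by_cases hay : a = y
    · rw [hay, hyx]; exact hxy'.symm
    by_cases hau : a = u
    · rw [hau, huv]; exact huv'
    by_cases hav : a = v
    · rw [hav, hvu]; exact huv'.symm
    exact .rel _ _ (.inl (.inl (hrest a hax hay hau hav)))
  calc _ ≤ Nat.card (Quotient (EqvGen.setoid t)) + 1 :=
        card_quotient_eqvGen_le_card_adjoin_add_one _ x y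
    _ ≤ _ := by
        gcongr
        refine card_quotient_eqvGen_le_of_forall_eqvGen fun a b hab => ?_
        rcases hab with rfl | rfl
        · exact hσt a
        · exact .rel _ _ (.inl (.inr rfl))

end DCJ

theorem dcj_changes_cycles_by_at_most_one_general (n : ℕ)
    (σ σ' τ : Equiv.Perm (Fin (2 * n)))
    (hσ : ∀ z, σ (σ z) = z)
    (hσ'2 : ∀ z, σ' (σ' z) = z)
    (x y u v : Fin (2 * n))
    (hxy : σ x = y) (huv : σ u = v)
    (hdcj : (σ' x = u ∧ σ' y = v) ∨ (σ' x = v ∧ σ' y = u))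
    (hrest : ∀ z, z ≠ x → z ≠ y → z ≠ u → z ≠ v → σ' z = σ z) :
    |(Nat.card (Quotient (Relation.EqvGen.setoid
        (fun a b => σ' a = b ∨ τ a = b))) : ℤ) -
      (Nat.card (Quotient (Relation.EqvGen.setoid
        (fun a b => σ a = b ∨ τ a = b))) : ℤ)| ≤ 1 ∧
    |((n : ℤ) - Nat.card (Quotient (Relation.EqvGen.setoid
        (fun a b => σ' a = b ∨ τ a = b)))) -
      ((n : ℤ) - Nat.card (Quotient (Relation.EqvGen.setoid
        (fun a b => σ a = b ∨ τ a = b))))| ≤ 1 := by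
  have hvu : σ v = u := by rw [← huv, hσ]
  set c' := Nat.card (Quotient (EqvGen.setoid (fun a b => σ' a = b ∨ τ a = b)))
  set c := Nat.card (Quotient (EqvGen.setoid (fun a b => σ a = b ∨ τ a = b)))
  -- `σ` arises from `σ'` by the reverse DCJ, so both inequalities are instances of one lemma.
  have hbounds : c' ≤ c + 1 ∧ c ≤ c' + 1 := by
    rcases hdcj with ⟨hxu, hyv⟩ | ⟨hxv, hyu⟩
    · exact ⟨card_cycles_le_add_one_of_dcj hσ hσ'2 hxy huv hxu hyv hrest,
        card_cycles_le_add_one_of_dcj hσ'2 hσ hxu hyv hxy huv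
          fun z hx hy hu hv => (hrest z hx hu hy hv).symm⟩
    · exact ⟨card_cycles_le_add_one_of_dcj hσ hσ'2 hxy hvu hxv hyu
          fun z hx hy hv hu => hrest z hx hy hu hv,
        card_cycles_le_add_one_of_dcj hσ'2 hσ hxv hyu hxy hvu
          fun z hx hv hy hu => (hrest z hx hy hu hv).symm⟩
  rw [sub_sub_sub_cancel_left, abs_sub_comm, and_self, abs_le]
  omega

/-- Genomes on `n` genes are perfect matchings (fixpoint-free involutions) on
the `2n` extremities.  Suppose `σ'` is obtained from the genome `σ` by a single
DCJ: two `σ`-edges `{x,y}` and `{u,v}` are replaced by either `{x,u},{y,v}` or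
`{x,v},{y,u}`, all other edges being unchanged.  Then for any fixed genome `τ`,
the number of alternating cycles `c` in the breakpoint graph (number of classes
of the equivalence generated by `a ~ σ a`, `a ~ τ a`) changes by at most `1`;
consequently the DCJ distance `d = n − c` changes by at most `1`. -/
theorem dcj_changes_cycles_by_at_most_one (n : ℕ)
    (σ σ' τ : Equiv.Perm (Fin (2 * n)))
    (hσ : ∀ z, σ (σ z) = z) (hσ' : ∀ z, σ z ≠ z)
    (hσ'2 : ∀ z, σ' (σ' z) = z) (hσ'3 : ∀ z, σ' z ≠ z)
    (hτ : ∀ z, τ (τ z) = z) (hτ' : ∀ z, τ z ≠ z)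
    (x y u v : Fin (2 * n))
    (hxy : σ x = y) (huv : σ u = v)
    (hxu : x ≠ u) (hxv : x ≠ v) (hyu : y ≠ u) (hyv : y ≠ v)
    (hdcj : (σ' x = u ∧ σ' y = v) ∨ (σ' x = v ∧ σ' y = u))
    (hrest : ∀ z, z ≠ x → z ≠ y → z ≠ u → z ≠ v → σ' z = σ z) :
    |(Nat.card (Quotient (Relation.EqvGen.setoid
        (fun a b => σ' a = b ∨ τ a = b))) : ℤ) -
      (Nat.card (Quotient (Relation.EqvGen.setoid
        (fun a b => σ a = b ∨ τ a = b))) : ℤ)| ≤ 1 ∧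
    |((n : ℤ) - Nat.card (Quotient (Relation.EqvGen.setoid
        (fun a b => σ' a = b ∨ τ a = b)))) -
      ((n : ℤ) - Nat.card (Quotient (Relation.EqvGen.setoid
        (fun a b => σ a = b ∨ τ a = b))))| ≤ 1 :=
  dcj_changes_cycles_by_at_most_one_general n σ σ' τ hσ hσ'2 x y u v hxy huv hdcj hrest
end

section
/- If A, B, C are three genomes on n genes with d(A,B) < n−1 and d(A,C) < n−1, then there exist two A-edges lying in two distinct AB-cycles and simultaneously in two distinct AC-cycles of the breakpoint graph BG(A,B,C). -/
/-!
By the distance bounds, the `AB`-cycles and the `AC`-cycles each split the extremities into at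
least two blocks, and any two such partitions separate some pair simultaneously: take `a, b` in
different `AB`-blocks; if they share an `AC`-block, pick `e` outside it. Then `e` is
`AC`-separated from both `a` and `b`, and `AB`-separated from at least one of them.
-/

lemma Equivalence.exists_not_and_not {α : Type*} {R S : α → α → Prop}
    (hR : Equivalence R) (hS : Equivalence S)
    {a b : α} (hab : ¬ R a b) {c d : α} (hcd : ¬ S c d) :
    ∃ p q, ¬ R p q ∧ ¬ S p q := by
  by_cases hSab : S a b
  · obtain ⟨e, hae⟩ : ∃ e, ¬ S a e := by
      by_contra! h
      exact hcd (hS.trans (hS.symm (h c)) (h d))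
    have hbe : ¬ S b e := fun h => hae (hS.trans hSab h)
    by_cases hRae : R a e
    · exact ⟨b, e, fun h => hab (hR.trans hRae (hR.symm h)), hbe⟩
    · exact ⟨a, e, hRae, hae⟩
  · exact ⟨a, b, hab, hSab⟩

lemma Relation.exists_not_eqvGen_of_one_lt_card {α : Type*} (r : α → α → Prop)
    (h : 1 < Nat.card (Quotient (Relation.EqvGen.setoid r))) :
    ∃ a b, ¬ Relation.EqvGen r a b := by
  have : Finite (Quotient (Relation.EqvGen.setoid r)) := Nat.finite_of_card_ne_zero (by omega)
  obtain ⟨⟨a⟩, ⟨b⟩, hab⟩ := (Finite.one_lt_card_iff_nontrivial.mp h).exists_pair_ne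
  exact ⟨a, b, fun h => hab (Quotient.sound h)⟩

theorem exists_pair_of_A_edges_general (n : ℕ)
    (σA σB σC : Equiv.Perm (Fin (2 * n)))
    (hdAB : (n : ℤ) - Nat.card (Quotient (Relation.EqvGen.setoid
        (fun a b => σA a = b ∨ σB a = b))) < (n : ℤ) - 1)
    (hdAC : (n : ℤ) - Nat.card (Quotient (Relation.EqvGen.setoid
        (fun a b => σA a = b ∨ σC a = b))) < (n : ℤ) - 1) :
    ∃ a b : Fin (2 * n),
      ¬ Relation.EqvGen (fun s t => σA s = t ∨ σB s = t) a b ∧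
      ¬ Relation.EqvGen (fun s t => σA s = t ∨ σC s = t) a b := by
  obtain ⟨a, b, hab⟩ := Relation.exists_not_eqvGen_of_one_lt_card _ (by omega : 1 < Nat.card
    (Quotient (Relation.EqvGen.setoid (fun a b : Fin (2 * n) => σA a = b ∨ σB a = b))))
  obtain ⟨c, d, hcd⟩ := Relation.exists_not_eqvGen_of_one_lt_card _ (by omega : 1 < Nat.card
    (Quotient (Relation.EqvGen.setoid (fun a b : Fin (2 * n) => σA a = b ∨ σC a = b))))
  exact (Relation.EqvGen.is_equivalence _).exists_not_and_not
    (Relation.EqvGen.is_equivalence _) hab hcd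

/-- Let `A, B, C` be genomes on `n` genes, i.e. perfect matchings
(fixpoint-free involutions `σA, σB, σC`) on the `2n` extremities, with
`d(A,B) < n−1` and `d(A,C) < n−1`, where `d(A,B) = n − c(A,B)` and `c(A,B)` is
the number of `AB`-cycles, i.e. of classes of the equivalence relation
generated by `a ~ σA a`, `a ~ σB a` (similarly for `AC`).  Then there exist
two `A`-edges (represented by endpoints `a, b`, the edges being `{a, σA a}`
and `{b, σA b}`) lying in two distinct `AB`-cycles and simultaneously in two
distinct `AC`-cycles of the breakpoint graph `BG(A,B,C)`. -/
theorem exists_pair_of_A_edges (n : ℕ)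
    (σA σB σC : Equiv.Perm (Fin (2 * n)))
    (hA : ∀ z, σA (σA z) = z) (hA' : ∀ z, σA z ≠ z)
    (hB : ∀ z, σB (σB z) = z) (hB' : ∀ z, σB z ≠ z)
    (hC : ∀ z, σC (σC z) = z) (hC' : ∀ z, σC z ≠ z)
    (hdAB : (n : ℤ) - Nat.card (Quotient (Relation.EqvGen.setoid
        (fun a b => σA a = b ∨ σB a = b))) < (n : ℤ) - 1)
    (hdAC : (n : ℤ) - Nat.card (Quotient (Relation.EqvGen.setoid
        (fun a b => σA a = b ∨ σC a = b))) < (n : ℤ) - 1) :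
    ∃ a b : Fin (2 * n),
      ¬ Relation.EqvGen (fun s t => σA s = t ∨ σB s = t) a b ∧
      ¬ Relation.EqvGen (fun s t => σA s = t ∨ σC s = t) a b :=
  exists_pair_of_A_edges_general n σA σB σC hdAB hdAC
end
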